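/- In a 2n-step simple symmetric random walk, the probability that the walk spends exactly 2k time units on the positive side equals C(2k,k)·C(2n-2k, n-k)/4^n (the discrete arcsine law). -/

import Mathlib

/-- Partial sum of the walk after the first `j` steps. -/
def S (n : ℕ) (ω : Fin n → Bool) (j : ℕ) : ℤ :=
  ∑ i : Fin n, if (i : ℕ) < j then (if ω i then (1 : ℤ) else -1) else 0

/-- Number of time units `(j-1, j)`, `1 ≤ j ≤ n`, spent on the positive side. -/
def posTime (n : ℕ) (ω : Fin n → Bool) : ℕ :=
  ((Finset.Icc 1 n).filter fun j => 0 < S n ω (j - 1) ∨ 0 < S n ω j).card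

/-!
Feller's first-return argument. A walk of length `2n` that never returns to zero stays on one side,
so its positive time is `0` or `2n`. A walk whose first return is at time `2r` is an excursion of
length `2r`, lying entirely on one side, followed by an arbitrary walk of length `2n - 2r`. Writing
`f r` for the number of negative excursions of length `2r` (by reflection, also the number of
positive ones) and `a n k` for the number of walks of length `2n` with positive time `2k`, this gives
for `0 < k < n`
  `a n k = ∑_{r ≤ n - k} f r * a (n - r) k + ∑_{r ≤ k} f r * a (n - r) (k - r)`,
while the same decomposition of the `u m = C(2m, m)` walks of length `2m` ending at zero gives
`u m = 2 * ∑_{r ≤ m} f r * u (m - r)`. So `u k * u (n - k)` satisfies the recursion of `a n k`.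
For `k = 0`, the walks staying `≤ 0` without returning are a step `-1` followed by a walk of odd
length `2n - 1` staying `≤ 0`, and those are half of the walks of length `2n` staying `≤ 0`, because
the last step of an odd walk ending below zero is free; hence `a n 0 = u n`, and `a n n = a n 0`
by reflection.
-/

open Finset

namespace List

variable {α : Type*}

theorem forall_prefix_cons {P : List α → Prop} (a : α) (l : List α) :
    (∀ p, p <+: a :: l → P p) ↔ P [] ∧ ∀ t, t <+: l → P (a :: t) := by
  simp only [prefix_cons_iff]
  constructor
  · intro h
    exact ⟨h [] (Or.inl rfl), fun t ht => h _ (Or.inr ⟨t, rfl, ht⟩)⟩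
  · rintro ⟨h0, h⟩ p (rfl | ⟨t, rfl, ht⟩)
    exacts [h0, h t ht]

theorem forall_prefix_concat {P : List α → Prop} (l : List α) (a : α) :
    (∀ p, p <+: l ++ [a] → P p) ↔ (∀ p, p <+: l → P p) ∧ P (l ++ [a]) := by
  simp only [prefix_concat_iff]
  constructor
  · intro h
    exact ⟨fun p hp => h p (Or.inr hp), h _ (Or.inl rfl)⟩
  · rintro ⟨h, hl⟩ p (rfl | hp)
    exacts [hl, h p hp]

end List

namespace LatticePath

def step (b : Bool) : ℤ := if b then 1 else -1

def height (l : List Bool) : ℤ := (l.map step).sum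

theorem step_eq_one_or (b : Bool) : step b = 1 ∨ step b = -1 := by
  cases b <;> simp [step]

@[simp] theorem step_not (b : Bool) : step (!b) = -step b := by
  cases b <;> simp [step]

@[simp] theorem height_nil : height [] = 0 := rfl

@[simp] theorem height_cons (b : Bool) (l : List Bool) : height (b :: l) = step b + height l := by
  simp [height]

@[simp] theorem height_append (l₁ l₂ : List Bool) :
    height (l₁ ++ l₂) = height l₁ + height l₂ := by
  simp [height]

@[simp] theorem height_map_not (l : List Bool) : height (l.map not) = -height l := by
  induction l with
  | nil => rfl
  | cons b l ih =>
    simp only [List.map_cons, height_cons, step_not, ih]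
    ring

theorem height_add_length (l : List Bool) : height l + l.length = 2 * l.count true := by
  induction l with
  | nil => rfl
  | cons b l ih => cases b <;> simp [step] <;> omega

def posTimeFrom : ℤ → List Bool → ℕ
  | _, [] => 0
  | h, b :: l => (if 0 < h ∨ 0 < h + step b then 1 else 0) + posTimeFrom (h + step b) l

theorem posTimeFrom_append (h : ℤ) (l₁ l₂ : List Bool) :
    posTimeFrom h (l₁ ++ l₂) = posTimeFrom h l₁ + posTimeFrom (h + height l₁) l₂ := by
  induction l₁ generalizing h with
  | nil => simp [posTimeFrom]
  | cons b l ih => simp [posTimeFrom, ih, add_assoc]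

-- The two endpoints of a time unit are not both at level zero, so the unit lies on the positive
-- side of exactly one of a walk and its mirror image.
theorem posTimeFrom_map_not_add (h : ℤ) (l : List Bool) :
    posTimeFrom (-h) (l.map not) + posTimeFrom h l = l.length := by
  induction l generalizing h with
  | nil => rfl
  | cons b l ih =>
    have := ih (h + step b)
    rw [neg_add] at this
    simp only [List.map_cons, posTimeFrom, step_not, List.length_cons]
    rcases step_eq_one_or b with hb | hb <;> rw [hb] at this ⊢ <;> split_ifs <;> omega

theorem posTimeFrom_le_length (h : ℤ) (l : List Bool) : posTimeFrom h l ≤ l.length := by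
  have := posTimeFrom_map_not_add h l
  omega

theorem posTimeFrom_eq_zero_iff {h : ℤ} (hh : h ≤ 0) {l : List Bool} :
    posTimeFrom h l = 0 ↔ ∀ p, p <+: l → h + height p ≤ 0 := by
  induction l generalizing h with
  | nil => simp [posTimeFrom, hh]
  | cons b l ih =>
    simp only [List.forall_prefix_cons, posTimeFrom, height_nil, height_cons, add_zero,
      ← add_assoc, Nat.add_eq_zero_iff, ite_eq_right_iff, one_ne_zero, imp_false, not_or, not_lt]
    constructor
    · rintro ⟨⟨-, hb⟩, hl⟩
      exact ⟨hh, (ih hb).1 hl⟩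
    · rintro ⟨-, hl⟩
      have hb : h + step b ≤ 0 := by simpa using hl [] List.nil_prefix
      exact ⟨⟨hh, hb⟩, (ih hb).2 hl⟩

theorem posTimeFrom_eq_length {h : ℤ} {l : List Bool}
    (hl : ∀ p, p <+: l → 0 ≤ h + height p) :
    posTimeFrom h l = l.length := by
  induction l generalizing h with
  | nil => rfl
  | cons b l ih =>
    rw [List.forall_prefix_cons] at hl
    have h0 : 0 ≤ h := by simpa using hl.1
    have h1 : 0 ≤ h + step b := by simpa using hl.2 [] List.nil_prefix
    rw [posTimeFrom, ih fun t ht => by simpa [add_assoc] using hl.2 t ht, List.length_cons,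
      if_pos (by rcases step_eq_one_or b with hb | hb <;> omega), add_comm]

theorem forall_prefix_height_nonneg_or_nonpos {l : List Bool}
    (hl : ∀ p, p <+: l → p ≠ [] → p ≠ l → height p ≠ 0) :
    (∀ p, p <+: l → 0 ≤ height p) ∨ ∀ p, p <+: l → height p ≤ 0 := by
  induction l using List.reverseRecOn with
  | nil => simp
  | append_singleton l b ih =>
    simp only [List.forall_prefix_concat, height_append, height_cons, height_nil, add_zero]
    rcases eq_or_ne l [] with rfl | hne
    · rcases step_eq_one_or b with hb | hb
      · exact Or.inl (by simp [hb])
      · exact Or.inr (by simp [hb])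
    have hlen : l ≠ l ++ [b] := by simp
    have hl0 : height l ≠ 0 := hl l (List.prefix_append _ _) hne hlen
    have ih := ih fun p hp hp0 hpl => hl p (hp.trans (List.prefix_append _ _)) hp0 fun h =>
      hpl (hp.eq_of_length (by simpa [h] using hp.length_le))
    rcases ih with H | H
    · have := H l List.prefix_rfl
      exact Or.inl ⟨H, by rcases step_eq_one_or b with hb | hb <;> omega⟩
    · have := H l List.prefix_rfl
      exact Or.inr ⟨H, by rcases step_eq_one_or b with hb | hb <;> omega⟩

theorem posTimeFrom_eq_zero_or_length {l : List Bool}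
    (hl : ∀ p, p <+: l → p ≠ [] → p ≠ l → height p ≠ 0) :
    posTimeFrom 0 l = 0 ∨ posTimeFrom 0 l = l.length := by
  rcases forall_prefix_height_nonneg_or_nonpos hl with H | H
  · exact Or.inr (posTimeFrom_eq_length (by simpa using H))
  · exact Or.inl ((posTimeFrom_eq_zero_iff le_rfl).2 (by simpa using H))

def ReturnsToZero (l : List Bool) : Prop :=
  ∃ p, p <+: l ∧ p ≠ [] ∧ height p = 0

structure IsExcursion (e : List Bool) : Prop where
  ne_nil : e ≠ []
  height_eq_zero : height e = 0
  eq_of_prefix : ∀ p, p <+: e → p ≠ [] → height p = 0 → p = e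

theorem IsExcursion.eq_of_prefix_of_prefix {e e' l : List Bool} (he : IsExcursion e)
    (he' : IsExcursion e') (h : e <+: l) (h' : e' <+: l) : e = e' := by
  rcases List.prefix_or_prefix_of_prefix h h' with hp | hp
  · exact he'.eq_of_prefix e hp he.ne_nil he.height_eq_zero
  · exact (he.eq_of_prefix e' hp he'.ne_nil he'.height_eq_zero).symm

theorem ReturnsToZero.exists_isExcursion {l : List Bool} (hl : ReturnsToZero l) :
    ∃ e, e <+: l ∧ IsExcursion e := by
  obtain ⟨p, hpl, hp, hp0⟩ := hl
  induction hn : p.length using Nat.strong_induction_on generalizing p with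
  | _ n ih =>
    by_cases hmin : ∀ q, q <+: p → q ≠ [] → height q = 0 → q = p
    · exact ⟨p, hpl, hp, hp0, hmin⟩
    · push Not at hmin
      obtain ⟨q, hqp, hq, hq0, hne⟩ := hmin
      have hlt : q.length < n :=
        hn ▸ lt_of_le_of_ne hqp.length_le fun h => hne (hqp.eq_of_length h)
      exact ih _ hlt q (hqp.trans hpl) hq hq0 rfl

theorem IsExcursion.even_length {e : List Bool} (he : IsExcursion e) : Even e.length := by
  have := height_add_length e
  rw [he.height_eq_zero, zero_add] at this
  exact ⟨e.count true, by omega⟩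

theorem IsExcursion.posTimeFrom_eq_zero_or_length {e : List Bool} (he : IsExcursion e) :
    posTimeFrom 0 e = 0 ∨ posTimeFrom 0 e = e.length :=
  LatticePath.posTimeFrom_eq_zero_or_length fun p hp hp0 hpe h0 =>
    hpe (he.eq_of_prefix p hp hp0 h0)

theorem posTimeFrom_eq_zero_or_length_of_not_returnsToZero {l : List Bool}
    (hl : ¬ReturnsToZero l) : posTimeFrom 0 l = 0 ∨ posTimeFrom 0 l = l.length :=
  posTimeFrom_eq_zero_or_length fun p hp hp0 _ h0 => hl ⟨p, hp, hp0, h0⟩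

theorem IsExcursion.map_not {e : List Bool} (he : IsExcursion e) : IsExcursion (e.map not) where
  ne_nil := by simpa using he.ne_nil
  height_eq_zero := by simp [he.height_eq_zero]
  eq_of_prefix p hp hp0 h0 := by
    have hq := he.eq_of_prefix (p.map not) (by simpa [Function.comp_def] using hp.map not)
      (by simpa using hp0) (by simpa using h0)
    rw [← hq, List.map_map]
    simp [Function.comp_def]

theorem isExcursion_map_not {e : List Bool} : IsExcursion (e.map not) ↔ IsExcursion e :=
  ⟨fun he => by simpa [Function.comp_def] using he.map_not, IsExcursion.map_not⟩

theorem not_returnsToZero_cons_and_posTimeFrom_eq_zero_iff (b : Bool) (l : List Bool) :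
    (¬ReturnsToZero (b :: l) ∧ posTimeFrom 0 (b :: l) = 0) ↔
      b = false ∧ posTimeFrom 0 l = 0 := by
  have hret : ReturnsToZero (b :: l) ↔ ∃ t, t <+: l ∧ step b + height t = 0 := by
    simp [ReturnsToZero, List.prefix_cons_iff]
  simp only [hret, posTimeFrom_eq_zero_iff le_rfl, List.forall_prefix_cons, zero_add, height_nil,
    height_cons, le_refl, true_and, not_exists, not_and]
  constructor
  · rintro ⟨hne, hle⟩
    have hb : b = false := by
      have := hle [] List.nil_prefix
      cases b <;> simp_all [step]
    subst hb
    refine ⟨rfl, fun t ht => ?_⟩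
    have := hle t ht
    have := hne t ht
    simp only [step] at *
    omega
  · rintro ⟨rfl, hl⟩
    refine ⟨fun t ht => ?_, fun t ht => ?_⟩ <;> have := hl t ht <;> simp [step] <;> omega

theorem posTimeFrom_concat_eq_zero_iff {l : List Bool} (hl : Odd l.length) (b : Bool) :
    posTimeFrom 0 (l ++ [b]) = 0 ↔ posTimeFrom 0 l = 0 := by
  rw [posTimeFrom_append, Nat.add_eq_zero_iff, and_iff_left_iff_imp]
  intro h0
  have hle : height l ≤ 0 := by
    simpa using (posTimeFrom_eq_zero_iff le_rfl).1 h0 l List.prefix_rfl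
  have hodd : height l ≠ 0 := fun h => by
    have := height_add_length l
    obtain ⟨c, hc⟩ := hl
    omega
  simp only [posTimeFrom, zero_add, add_zero, ite_eq_right_iff, one_ne_zero, imp_false, not_or,
    not_lt]
  rcases step_eq_one_or b with hb | hb <;> omega

def walks (L : ℕ) : Finset (List Bool) :=
  (univ : Finset (Fin L → Bool)).map ⟨List.ofFn, List.ofFn_injective⟩

@[simp] theorem mem_walks {L : ℕ} {l : List Bool} : l ∈ walks L ↔ l.length = L := by
  simp only [walks, mem_map, mem_univ, true_and, Function.Embedding.coeFn_mk]
  constructor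
  · rintro ⟨ω, rfl⟩
    exact List.length_ofFn
  · rintro rfl
    exact ⟨fun i => l[i], List.ofFn_getElem⟩

theorem card_filter_walks (L : ℕ) (P : List Bool → Prop) [DecidablePred P] :
    #{l ∈ walks L | P l} = #{ω : Fin L → Bool | P (List.ofFn ω)} := by
  rw [walks, filter_map, card_map]
  rfl

theorem card_walks (L : ℕ) : #(walks L) = 2 ^ L := by
  simp [walks]

theorem card_filter_walks_add (a b : ℕ) (P : List Bool → Prop) [DecidablePred P] :
    #{l ∈ walks (a + b) | P l} = #{x ∈ walks a ×ˢ walks b | P (x.1 ++ x.2)} := by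
  symm
  refine card_nbij' (fun x => x.1 ++ x.2) (fun l => (l.take a, l.drop a)) ?_ ?_ ?_ ?_ <;>
    intro x hx <;> simp_all

theorem card_filter_walks_map_not (L : ℕ) (P : List Bool → Prop) [DecidablePred P] :
    #{l ∈ walks L | P (l.map not)} = #{l ∈ walks L | P l} := by
  refine card_nbij' (List.map not) (List.map not) ?_ ?_ ?_ ?_ <;> intro l h <;>
    simp_all [Function.comp_def]

theorem count_true_ofFn {L : ℕ} (ω : Fin L → Bool) :
    (List.ofFn ω).count true = #{i | ω i = true} := by
  induction L with
  | zero => simp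
  | succ L ih =>
    rw [List.ofFn_succ, List.count_cons, ih, card_filter, card_filter, Fin.sum_univ_succ]
    simp [add_comm]

theorem card_filter_walks_count_true (L k : ℕ) :
    #{l ∈ walks L | l.count true = k} = L.choose k := by
  rw [card_filter_walks, show L.choose k = #(powersetCard k (univ : Finset (Fin L))) by simp]
  refine card_nbij' (fun ω => ({i | ω i = true} : Finset (Fin L))) (fun s i => decide (i ∈ s))
    ?_ ?_ ?_ ?_
  · intro ω h
    simp_all [count_true_ofFn]
  · intro s h
    simp_all [count_true_ofFn]
  · intro ω _
    ext i
    simp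
  · intro s _
    ext i
    simp

open scoped Classical

def balancedCount (m : ℕ) : ℕ := #{l ∈ walks (2 * m) | height l = 0}

def posTimeCount (L t : ℕ) : ℕ := #{l ∈ walks L | posTimeFrom 0 l = t}

noncomputable def negExcursionCount (r : ℕ) : ℕ :=
  #{e ∈ walks (2 * r) | IsExcursion e ∧ posTimeFrom 0 e = 0}

theorem balancedCount_zero : balancedCount 0 = 1 := by decide

theorem balancedCount_eq_choose (m : ℕ) : balancedCount m = (2 * m).choose m := by
  rw [balancedCount, ← card_filter_walks_count_true]
  refine congrArg card (filter_congr fun l hl => ?_)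
  have := height_add_length l
  rw [mem_walks] at hl
  omega

theorem posTimeCount_eq_zero_of_lt {L t : ℕ} (h : L < t) : posTimeCount L t = 0 := by
  rw [posTimeCount, card_eq_zero, filter_eq_empty_iff]
  intro l hl
  have := posTimeFrom_le_length 0 l
  rw [mem_walks] at hl
  omega

theorem posTimeCount_self (L : ℕ) : posTimeCount L L = posTimeCount L 0 := by
  rw [posTimeCount, posTimeCount, ← card_filter_walks_map_not L (posTimeFrom 0 · = 0)]
  refine congrArg card (filter_congr fun l hl => ?_)
  have := posTimeFrom_map_not_add 0 l
  rw [neg_zero] at this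
  rw [mem_walks] at hl
  omega

theorem card_filter_isExcursion_posTimeFrom_eq_length (r : ℕ) :
    #{e ∈ walks (2 * r) | IsExcursion e ∧ posTimeFrom 0 e = 2 * r} = negExcursionCount r := by
  rw [negExcursionCount, ← card_filter_walks_map_not]
  refine congrArg card (filter_congr fun e he => ?_)
  have := posTimeFrom_map_not_add 0 e
  rw [neg_zero] at this
  rw [mem_walks] at he
  rw [isExcursion_map_not]
  exact and_congr_right fun _ => by omega

theorem card_filter_isExcursion {r : ℕ} (hr : 0 < r) :
    #{e ∈ walks (2 * r) | IsExcursion e} = 2 * negExcursionCount r := by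
  have hsplit : {e ∈ walks (2 * r) | IsExcursion e} =
      {e ∈ walks (2 * r) | IsExcursion e ∧ posTimeFrom 0 e = 0} ∪
        {e ∈ walks (2 * r) | IsExcursion e ∧ posTimeFrom 0 e = 2 * r} := by
    rw [← filter_or]
    refine filter_congr fun e he => ?_
    rw [mem_walks] at he
    rw [← he, ← and_or_left, iff_self_and]
    exact IsExcursion.posTimeFrom_eq_zero_or_length
  rw [hsplit, card_union_of_disjoint, card_filter_isExcursion_posTimeFrom_eq_length,
    Nat.two_mul (negExcursionCount r)]
  · rfl
  rw [disjoint_filter]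
  rintro e - ⟨-, h0⟩ ⟨-, h1⟩
  omega

theorem card_filter_and_returnsToZero (n : ℕ) (P : List Bool → Prop) [DecidablePred P] :
    #{l ∈ walks (2 * n) | P l ∧ ReturnsToZero l} =
      ∑ r ∈ Icc 1 n,
        #{x ∈ walks (2 * r) ×ˢ walks (2 * (n - r)) | IsExcursion x.1 ∧ P (x.1 ++ x.2)} := by
  have hunion : {l ∈ walks (2 * n) | P l ∧ ReturnsToZero l} =
      (Icc 1 n).biUnion fun r => {l ∈ walks (2 * n) | IsExcursion (l.take (2 * r)) ∧ P l} := by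
    ext l
    simp only [mem_filter, mem_biUnion, mem_Icc, mem_walks]
    constructor
    · rintro ⟨hl, hP, hret⟩
      obtain ⟨e, hel, he⟩ := hret.exists_isExcursion
      obtain ⟨r, hr⟩ := he.even_length
      have hle : e.length ≤ 2 * n := hl ▸ hel.length_le
      have hpos : e.length ≠ 0 := by simpa using he.ne_nil
      refine ⟨r, ⟨by omega, by omega⟩, hl, ?_, hP⟩
      rwa [show 2 * r = e.length by omega, ← List.prefix_iff_eq_take.1 hel]
    · rintro ⟨r, -, hl, he, hP⟩
      exact ⟨hl, hP, _, List.take_prefix _ _, he.ne_nil, he.height_eq_zero⟩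
  rw [hunion, card_biUnion]
  · refine sum_congr rfl fun r hr => ?_
    rw [mem_Icc] at hr
    rw [show 2 * n = 2 * r + 2 * (n - r) by omega, card_filter_walks_add]
    refine congrArg card (filter_congr fun x hx => ?_)
    rw [mem_product, mem_walks] at hx
    rw [List.take_left' hx.1]
  · intro r hr s hs hrs
    rw [Function.onFun, disjoint_left]
    intro l hl hl'
    simp only [coe_Icc, Set.mem_Icc, mem_filter, mem_walks] at hr hs hl hl'
    have := congrArg List.length <|
      hl.2.1.eq_of_prefix_of_prefix hl'.2.1 (List.take_prefix _ _) (List.take_prefix _ _)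
    simp only [List.length_take] at this
    omega

theorem balancedCount_eq_sum {m : ℕ} (hm : 0 < m) :
    balancedCount m = 2 * ∑ r ∈ Icc 1 m, negExcursionCount r * balancedCount (m - r) := by
  have hret : balancedCount m = #{l ∈ walks (2 * m) | height l = 0 ∧ ReturnsToZero l} := by
    refine congrArg card (filter_congr fun l hl => ?_)
    rw [mem_walks] at hl
    refine ⟨fun h => ⟨h, l, List.prefix_rfl, ?_, h⟩, And.left⟩
    rintro rfl
    simp only [List.length_nil] at hl
    omega
  rw [hret, card_filter_and_returnsToZero, mul_sum]
  refine sum_congr rfl fun r hr => ?_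
  rw [mem_Icc] at hr
  rw [← mul_assoc, ← card_filter_isExcursion (by omega), balancedCount, ← card_product,
    ← filter_product]
  refine congrArg card (filter_congr fun x _ => and_congr_right fun he => ?_)
  rw [height_append, he.height_eq_zero, zero_add]

theorem card_filter_isExcursion_and_posTimeFrom_append {r : ℕ} (hr : 0 < r) (L t : ℕ) :
    #{x ∈ walks (2 * r) ×ˢ walks L | IsExcursion x.1 ∧ posTimeFrom 0 (x.1 ++ x.2) = t} =
      negExcursionCount r * posTimeCount L t +
        negExcursionCount r * #{w ∈ walks L | posTimeFrom 0 w + 2 * r = t} := by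
  have hsplit :
      {x ∈ walks (2 * r) ×ˢ walks L | IsExcursion x.1 ∧ posTimeFrom 0 (x.1 ++ x.2) = t} =
      {x ∈ walks (2 * r) ×ˢ walks L |
          (IsExcursion x.1 ∧ posTimeFrom 0 x.1 = 0) ∧ posTimeFrom 0 x.2 = t} ∪
        {x ∈ walks (2 * r) ×ˢ walks L |
          (IsExcursion x.1 ∧ posTimeFrom 0 x.1 = 2 * r) ∧ posTimeFrom 0 x.2 + 2 * r = t} := by
    rw [← filter_or]
    refine filter_congr fun x hx => ?_
    rw [mem_product, mem_walks] at hx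
    constructor
    · rintro ⟨he, h⟩
      rw [posTimeFrom_append, he.height_eq_zero, add_zero] at h
      rcases he.posTimeFrom_eq_zero_or_length with h0 | h0
      · exact Or.inl ⟨⟨he, h0⟩, by omega⟩
      · exact Or.inr ⟨⟨he, hx.1 ▸ h0⟩, by omega⟩
    · rintro (⟨⟨he, h0⟩, h⟩ | ⟨⟨he, h0⟩, h⟩) <;>
        refine ⟨he, ?_⟩ <;> rw [posTimeFrom_append, he.height_eq_zero, add_zero] <;> omega
  rw [hsplit, card_union_of_disjoint,
    filter_product (fun e => IsExcursion e ∧ posTimeFrom 0 e = 0) (posTimeFrom 0 · = t),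
    filter_product (fun e => IsExcursion e ∧ posTimeFrom 0 e = 2 * r)
      (posTimeFrom 0 · + 2 * r = t),
    card_product, card_product, card_filter_isExcursion_posTimeFrom_eq_length]
  · rfl
  rw [disjoint_filter]
  rintro x - ⟨⟨-, h0⟩, -⟩ ⟨⟨-, h1⟩, -⟩
  omega

theorem posTimeCount_eq_sum {n k : ℕ} (hk : k ≤ n) :
    posTimeCount (2 * n) (2 * k) =
      ∑ r ∈ Icc 1 (n - k), negExcursionCount r * posTimeCount (2 * (n - r)) (2 * k) +
        ∑ r ∈ Icc 1 k, negExcursionCount r * posTimeCount (2 * (n - r)) (2 * (k - r)) +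
          #{l ∈ walks (2 * n) | posTimeFrom 0 l = 2 * k ∧ ¬ReturnsToZero l} := by
  have hneg : ∑ r ∈ Icc 1 n, negExcursionCount r * posTimeCount (2 * (n - r)) (2 * k) =
      ∑ r ∈ Icc 1 (n - k), negExcursionCount r * posTimeCount (2 * (n - r)) (2 * k) := by
    refine (sum_subset (Icc_subset_Icc_right (Nat.sub_le n k)) fun r hr hr' => ?_).symm
    simp only [mem_Icc] at hr hr'
    rw [posTimeCount_eq_zero_of_lt (by omega), mul_zero]
  have hpos : ∑ r ∈ Icc 1 n, negExcursionCount r *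
        #{w ∈ walks (2 * (n - r)) | posTimeFrom 0 w + 2 * r = 2 * k} =
      ∑ r ∈ Icc 1 k, negExcursionCount r * posTimeCount (2 * (n - r)) (2 * (k - r)) := by
    symm
    refine sum_subset_zero_on_sdiff (Icc_subset_Icc_right hk) (fun r hr => ?_) fun r hr => ?_
    · simp only [mem_sdiff, mem_Icc] at hr
      rw [card_eq_zero.2 (filter_eq_empty_iff.2 fun w _ => by omega), mul_zero]
    · rw [mem_Icc] at hr
      congr 1
      exact congrArg card (filter_congr fun w _ => by omega)
  rw [posTimeCount, ← card_filter_add_card_filter_not ReturnsToZero, filter_filter,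
    filter_filter, card_filter_and_returnsToZero, ← hneg, ← hpos, ← sum_add_distrib,
    sum_congr rfl fun r hr =>
      card_filter_isExcursion_and_posTimeFrom_append (mem_Icc.1 hr).1 _ _]

theorem card_filter_posTimeFrom_eq_zero_and_not_returnsToZero (L : ℕ) :
    #{l ∈ walks (L + 1) | posTimeFrom 0 l = 0 ∧ ¬ReturnsToZero l} = posTimeCount L 0 := by
  rw [add_comm, card_filter_walks_add,
    filter_congr (q := fun x => x.1 = [false] ∧ posTimeFrom 0 x.2 = 0) fun x hx => ?_,
    filter_product (· = [false]) (posTimeFrom 0 · = 0), card_product, filter_eq',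
    if_pos (by simp), card_singleton, one_mul]
  · rfl
  rw [mem_product, mem_walks, List.length_eq_one_iff] at hx
  obtain ⟨b, hb⟩ := hx.1
  rw [hb, List.singleton_append, and_comm, not_returnsToZero_cons_and_posTimeFrom_eq_zero_iff]
  simp

theorem posTimeCount_succ_zero {L : ℕ} (hL : Odd L) :
    posTimeCount (L + 1) 0 = 2 * posTimeCount L 0 := by
  rw [posTimeCount, card_filter_walks_add,
    filter_congr (q := fun x => posTimeFrom 0 x.1 = 0 ∧ True) fun x hx => ?_,
    filter_product (posTimeFrom 0 · = 0) fun _ => True, filter_true, card_product, card_walks,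
    pow_one, mul_comm]
  · rfl
  rw [mem_product, mem_walks, mem_walks, List.length_eq_one_iff] at hx
  obtain ⟨b, hb⟩ := hx.2
  rw [hb, posTimeFrom_concat_eq_zero_iff (hx.1 ▸ hL), and_true]

theorem posTimeCount_zero (n : ℕ) : posTimeCount (2 * n) 0 = balancedCount n := by
  induction n using Nat.strong_induction_on with
  | _ n ih =>
    rcases Nat.eq_zero_or_pos n with rfl | hn
    · decide
    have h := posTimeCount_eq_sum (Nat.zero_le n)
    obtain ⟨L, hL⟩ : ∃ L, 2 * n = L + 1 := ⟨2 * n - 1, by omega⟩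
    have hnr := posTimeCount_succ_zero (L := L) ⟨n - 1, by omega⟩
    rw [← card_filter_posTimeFrom_eq_zero_and_not_returnsToZero L, ← hL] at hnr
    simp only [Nat.sub_zero, mul_zero, Icc_eq_empty_of_lt zero_lt_one, sum_empty, add_zero] at h
    rw [sum_congr rfl fun r hr => by rw [ih (n - r) (by rw [mem_Icc] at hr; omega)]] at h
    rw [balancedCount_eq_sum hn]
    omega

theorem posTimeCount_eq_mul {n k : ℕ} (hk : k ≤ n) :
    posTimeCount (2 * n) (2 * k) = balancedCount k * balancedCount (n - k) := by
  induction n using Nat.strong_induction_on generalizing k with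
  | _ n ih =>
    rcases Nat.eq_zero_or_pos k with rfl | hk0
    · rw [mul_zero, posTimeCount_zero, balancedCount_zero, one_mul, Nat.sub_zero]
    rcases hk.eq_or_lt with rfl | hkn
    · rw [posTimeCount_self, posTimeCount_zero, Nat.sub_self, balancedCount_zero, mul_one]
    have hnr : #{l ∈ walks (2 * n) | posTimeFrom 0 l = 2 * k ∧ ¬ReturnsToZero l} = 0 := by
      refine card_eq_zero.2 (filter_eq_empty_iff.2 fun l hl ⟨h, hret⟩ => ?_)
      rw [mem_walks] at hl
      rcases posTimeFrom_eq_zero_or_length_of_not_returnsToZero hret with h' | h' <;> omega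
    have hneg : ∑ r ∈ Icc 1 (n - k), negExcursionCount r * posTimeCount (2 * (n - r)) (2 * k) =
        balancedCount k *
          ∑ r ∈ Icc 1 (n - k), negExcursionCount r * balancedCount (n - k - r) := by
      rw [mul_sum]
      refine sum_congr rfl fun r hr => ?_
      rw [mem_Icc] at hr
      rw [ih (n - r) (by omega) (by omega), show n - r - k = n - k - r by omega]
      ring
    have hpos :
        ∑ r ∈ Icc 1 k, negExcursionCount r * posTimeCount (2 * (n - r)) (2 * (k - r)) =
          (∑ r ∈ Icc 1 k, negExcursionCount r * balancedCount (k - r)) * balancedCount (n - k) := by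
      rw [sum_mul]
      refine sum_congr rfl fun r hr => ?_
      rw [mem_Icc] at hr
      rw [ih (n - r) (by omega) (by omega), show n - r - (k - r) = n - k by omega]
      ring
    rw [posTimeCount_eq_sum hk, hnr, hneg, hpos, add_zero, balancedCount_eq_sum hk0,
      balancedCount_eq_sum (show 0 < n - k by omega)]
    ring

theorem S_eq_height_take (n : ℕ) (ω : Fin n → Bool) (j : ℕ) :
    S n ω j = height ((List.ofFn ω).take j) := by
  rw [height, List.map_take, List.map_ofFn, List.sum_take_ofFn, S, sum_filter]
  rfl

theorem posTimeFrom_eq_card (h : ℤ) (l : List Bool) :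
    posTimeFrom h l =
      #{j ∈ range l.length | 0 < h + height (l.take j) ∨ 0 < h + height (l.take (j + 1))} := by
  induction l generalizing h with
  | nil => rfl
  | cons b l ih =>
    rw [posTimeFrom, ih, List.length_cons, card_filter, card_filter, sum_range_succ']
    simp only [List.take_succ_cons, List.take_zero, height_cons, height_nil, add_zero]
    rw [add_comm]
    simp only [add_assoc]

theorem posTime_eq_posTimeFrom (n : ℕ) (ω : Fin n → Bool) :
    posTime n ω = posTimeFrom 0 (List.ofFn ω) := by
  rw [posTimeFrom_eq_card, List.length_ofFn, posTime]
  simp only [S_eq_height_take, zero_add]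
  refine card_nbij' (· - 1) (· + 1) ?_ ?_ ?_ ?_ <;> intro j hj <;> simp_all
  omega

end LatticePath

theorem discrete_arcsine_law (n k : ℕ) (hk : k ≤ n) :
    ((Finset.univ.filter fun ω : Fin (2 * n) → Bool =>
        posTime (2 * n) ω = 2 * k).card : ℝ) / 4 ^ n =
      ((2 * k).choose k : ℝ) * ((2 * n - 2 * k).choose (n - k)) / 4 ^ n := by
  have hcount : #{ω : Fin (2 * n) → Bool | posTime (2 * n) ω = 2 * k} =
      (2 * k).choose k * (2 * n - 2 * k).choose (n - k) := by
    simp only [LatticePath.posTime_eq_posTimeFrom]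
    rw [← LatticePath.card_filter_walks (2 * n) (LatticePath.posTimeFrom 0 · = 2 * k),
      ← LatticePath.posTimeCount, LatticePath.posTimeCount_eq_mul hk,
      LatticePath.balancedCount_eq_choose, LatticePath.balancedCount_eq_choose, Nat.mul_sub]
  rw [hcount, Nat.cast_mul]
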